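/- Let I = ⟨y^{b_0}, x^{a_1}y^{b_1}, ..., x^{a_{n-1}}y^{b_{n-1}}, x^{a_n}⟩ ⊂ K[x,y] be a monomial ideal with each generator in the integral closure of ⟨x^{a_n}, y^{b_0}⟩. If a_i ≥ a_n/2 for all 1 ≤ i ≤ n-1, or b_i ≥ b_0/2 for all 1 ≤ i ≤ n-1, then I is Ratliff-Rush, i.e., I = ∪_{m≥1}(I^{m+1} : I^m). -/

import Mathlib

open Pointwise MvPolynomial

/-- k-fold pointwise sumset. -/
def sumPow {M : Type*} [AddMonoid M] (S : Set M) : ℕ → Set M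
  | 0 => {0}
  | k + 1 => S + sumPow S k

lemma mem_sumPow {M : Type*} [AddCommMonoid M] {S : Set M} :
    ∀ {k : ℕ} {s : M}, s ∈ sumPow S k →
      ∃ g : Fin k → M, (∀ j, g j ∈ S) ∧ s = ∑ j, g j := by
  intro k
  induction k with
  | zero =>
    intro s hs
    exact ⟨Fin.elim0, fun j => j.elim0, by simpa [sumPow] using hs⟩
  | succ k ih =>
    intro s hs
    obtain ⟨x, hx, y, hy, rfl⟩ := hs
    obtain ⟨g, hg, rfl⟩ := ih hy
    refine ⟨Fin.cons x g, ?_, ?_⟩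
    · intro j
      refine Fin.cases ?_ ?_ j
      · exact hx
      · exact fun i => hg i
    · rw [Fin.sum_cons]

lemma span_monomial_pow {K : Type*} [CommSemiring K] (S : Set (Fin 2 →₀ ℕ)) (k : ℕ) :
    (Ideal.span ((fun s => monomial s (1 : K)) '' S)) ^ k =
      Ideal.span ((fun s => monomial s (1 : K)) '' sumPow S k) := by
  induction k with
  | zero =>
    simp only [pow_zero, sumPow, Set.image_singleton, Ideal.one_eq_top]
    rw [show monomial (0 : Fin 2 →₀ ℕ) (1 : K) = 1 by simp [monomial_zero']]
    exact (Ideal.span_singleton_one).symm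
  | succ k ih =>
    rw [pow_succ', ih, Ideal.span_mul_span']
    congr 1
    ext z
    constructor
    · rintro ⟨_, ⟨x, hx, rfl⟩, _, ⟨y, hy, rfl⟩, rfl⟩
      exact ⟨x + y, ⟨x, hx, y, hy, rfl⟩, by simp [monomial_mul]⟩
    · rintro ⟨_, ⟨x, hx, y, hy, rfl⟩, rfl⟩
      exact ⟨monomial x 1, ⟨x, hx, rfl⟩, monomial y 1, ⟨y, hy, rfl⟩,
        by simp [monomial_mul]⟩

/-- Combinatorial core, case of the `a`-hypothesis. -/
lemma comb_a (n m : ℕ) (a b : ℕ → ℕ) (ha0 : a 0 = 0) (hbn : b n = 0)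
    (hhalf : ∀ i, 1 ≤ i → i ≤ n - 1 → 2 * a i ≥ a n)
    (g : Fin (m + 1) → ℕ) (hg : ∀ j, g j ≤ n) (c d : ℕ)
    (hc : ∑ j, a (g j) ≤ c + m * a 0) (hd : ∑ j, b (g j) ≤ d + m * b 0) :
    ∃ i ≤ n, a i ≤ c ∧ b i ≤ d := by
  simp only [ha0, Nat.mul_zero, Nat.add_zero] at hc
  by_cases hdB : b 0 ≤ d
  · exact ⟨0, Nat.zero_le n, by omega, hdB⟩
  by_cases hcA : a n ≤ c
  · exact ⟨n, le_refl n, hcA, by omega⟩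
  push_neg at hdB hcA
  have key : ∀ j, 1 ≤ g j → a n ≤ 2 * a (g j) := by
    intro j hj
    rcases eq_or_ne (g j) n with h | h
    · rw [h]; omega
    · exact hhalf (g j) hj (by have := hg j; omega)
  by_cases hex : ∃ j0, 1 ≤ g j0
  · obtain ⟨j0, hj0⟩ := hex
    by_cases hex2 : ∃ j1, j1 ≠ j0 ∧ 1 ≤ g j1
    · obtain ⟨j1, hj1ne, hj1⟩ := hex2
      exfalso
      have h1 : a (g j0) + a (g j1) ≤ ∑ j, a (g j) := by
        rw [← Finset.add_sum_erase _ _ (Finset.mem_univ j0)]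
        have : a (g j1) ≤ ∑ j ∈ Finset.univ.erase j0, a (g j) :=
          Finset.single_le_sum (f := fun j => a (g j)) (fun i _ => Nat.zero_le _)
            (Finset.mem_erase.mpr ⟨hj1ne, Finset.mem_univ j1⟩)
        omega
      have h2 := key j0 hj0
      have h3 := key j1 hj1
      omega
    · push_neg at hex2
      have hz : ∀ j, j ≠ j0 → g j = 0 := by
        intro j hj
        have := hex2 j hj
        omega
      have hsa : ∑ j, a (g j) = a (g j0) := by
        rw [← Finset.add_sum_erase _ _ (Finset.mem_univ j0)]
        rw [Finset.sum_eq_zero]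
        · omega
        · intro j hj
          rw [hz j (Finset.mem_erase.mp hj).1, ha0]
      have hsb : ∑ j, b (g j) = b (g j0) + m * b 0 := by
        rw [← Finset.add_sum_erase _ _ (Finset.mem_univ j0)]
        congr 1
        rw [Finset.sum_congr rfl (fun j hj => by rw [hz j (Finset.mem_erase.mp hj).1]),
          Finset.sum_const, Finset.card_erase_of_mem (Finset.mem_univ j0), Finset.card_univ,
          Fintype.card_fin]
        simp [Nat.mul_comm]
      exact ⟨g j0, hg j0, by omega, by omega⟩
  · push_neg at hex
    exfalso
    have hz : ∀ j, g j = 0 := fun j => by have := hex j; omega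
    have hsb : ∑ j, b (g j) = (m + 1) * b 0 := by
      rw [Finset.sum_congr rfl (fun j _ => by rw [hz j]), Finset.sum_const, Finset.card_univ,
        Fintype.card_fin]
      simp [Nat.mul_comm]
    have hmul : (m + 1) * b 0 = m * b 0 + b 0 := by ring
    omega

/-- Combinatorial core, case of the `b`-hypothesis. -/
lemma comb_b (n m : ℕ) (a b : ℕ → ℕ) (ha0 : a 0 = 0) (hbn : b n = 0)
    (hhalf : ∀ i, 1 ≤ i → i ≤ n - 1 → 2 * b i ≥ b 0)
    (g : Fin (m + 1) → ℕ) (hg : ∀ j, g j ≤ n) (c d : ℕ)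
    (hc : ∑ j, a (g j) ≤ c + m * a n) (hd : ∑ j, b (g j) ≤ d + m * b n) :
    ∃ i ≤ n, a i ≤ c ∧ b i ≤ d := by
  simp only [hbn, Nat.mul_zero, Nat.add_zero] at hd
  by_cases hdB : b 0 ≤ d
  · exact ⟨0, Nat.zero_le n, by omega, hdB⟩
  by_cases hcA : a n ≤ c
  · exact ⟨n, le_refl n, hcA, by omega⟩
  push_neg at hdB hcA
  have key : ∀ j, g j ≠ n → b 0 ≤ 2 * b (g j) := by
    intro j hj
    rcases Nat.eq_zero_or_pos (g j) with h | h
    · rw [h]; omega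
    · exact hhalf (g j) h (by have := hg j; omega)
  by_cases hex : ∃ j0, g j0 ≠ n
  · obtain ⟨j0, hj0⟩ := hex
    by_cases hex2 : ∃ j1, j1 ≠ j0 ∧ g j1 ≠ n
    · obtain ⟨j1, hj1ne, hj1⟩ := hex2
      exfalso
      have h1 : b (g j0) + b (g j1) ≤ ∑ j, b (g j) := by
        rw [← Finset.add_sum_erase _ _ (Finset.mem_univ j0)]
        have : b (g j1) ≤ ∑ j ∈ Finset.univ.erase j0, b (g j) :=
          Finset.single_le_sum (f := fun j => b (g j)) (fun i _ => Nat.zero_le _)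
            (Finset.mem_erase.mpr ⟨hj1ne, Finset.mem_univ j1⟩)
        omega
      have h2 := key j0 hj0
      have h3 := key j1 hj1
      omega
    · push_neg at hex2
      have hz : ∀ j, j ≠ j0 → g j = n := fun j hj => hex2 j hj
      have hsa : ∑ j, a (g j) = a (g j0) + m * a n := by
        rw [← Finset.add_sum_erase _ _ (Finset.mem_univ j0)]
        congr 1
        rw [Finset.sum_congr rfl (fun j hj => by rw [hz j (Finset.mem_erase.mp hj).1]),
          Finset.sum_const, Finset.card_erase_of_mem (Finset.mem_univ j0), Finset.card_univ,
          Fintype.card_fin]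
        simp [Nat.mul_comm]
      have hsb : ∑ j, b (g j) = b (g j0) := by
        rw [← Finset.add_sum_erase _ _ (Finset.mem_univ j0)]
        rw [Finset.sum_eq_zero]
        · omega
        · intro j hj
          rw [hz j (Finset.mem_erase.mp hj).1, hbn]
      exact ⟨g j0, hg j0, by omega, by omega⟩
  · push_neg at hex
    exfalso
    have hsa : ∑ j, a (g j) = (m + 1) * a n := by
      rw [Finset.sum_congr rfl (fun j _ => by rw [hex j]), Finset.sum_const, Finset.card_univ,
        Fintype.card_fin]
      simp [Nat.mul_comm]
    have hmul : (m + 1) * a n = m * a n + a n := by ring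
    omega

/-- The Ratliff-Rush closure of an ideal, as a set: `∪_{m≥1} (I^{m+1} : I^m)`. -/
def ratliffRushClosure {R : Type*} [CommRing R] (I : Ideal R) : Set R :=
  {x | ∃ m : ℕ, 1 ≤ m ∧ x ∈ (I ^ (m + 1)).colon ((I ^ m : Ideal R) : Set R)}

/-- An ideal is Ratliff-Rush if it equals its Ratliff-Rush closure. -/
def IsRatliffRush {R : Type*} [CommRing R] (I : Ideal R) : Prop :=
  (I : Set R) = ratliffRushClosure I

theorem ratliffRush_of_half_degrees (K : Type*) [Field K] (n : ℕ) (hn : 1 ≤ n)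
    (a b : ℕ → ℕ) (ha0 : a 0 = 0) (hbn : b n = 0) (han : 0 < a n) (hb0 : 0 < b 0)
    (hint : ∀ i ≤ n, (a i : ℚ) / a n + (b i : ℚ) / b 0 ≥ 1)
    (hhalf : (∀ i, 1 ≤ i → i ≤ n - 1 → 2 * a i ≥ a n) ∨
             (∀ i, 1 ≤ i → i ≤ n - 1 → 2 * b i ≥ b 0)) :
    IsRatliffRush (Ideal.span
      {p : MvPolynomial (Fin 2) K | ∃ i ≤ n,
        p = MvPolynomial.X 0 ^ a i * MvPolynomial.X 1 ^ b i}) := by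
  classical
  set E : ℕ → (Fin 2 →₀ ℕ) :=
    fun i => Finsupp.single 0 (a i) + Finsupp.single 1 (b i) with hE
  set S : Set (Fin 2 →₀ ℕ) := E '' Set.Iic n with hS
  have hset : {p : MvPolynomial (Fin 2) K | ∃ i ≤ n,
      p = MvPolynomial.X 0 ^ a i * MvPolynomial.X 1 ^ b i} =
      (fun s => monomial s (1 : K)) '' S := by
    ext p
    constructor
    · rintro ⟨i, hi, rfl⟩
      exact ⟨E i, ⟨i, hi, rfl⟩, by
        rw [hE, X_pow_eq_monomial, X_pow_eq_monomial, monomial_mul, one_mul]⟩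
    · rintro ⟨_, ⟨i, hi, rfl⟩, rfl⟩
      exact ⟨i, hi, by
        rw [hE, X_pow_eq_monomial, X_pow_eq_monomial, monomial_mul, one_mul]⟩
  rw [hset]
  set I : Ideal (MvPolynomial (Fin 2) K) :=
    Ideal.span ((fun s => monomial s (1 : K)) '' S) with hI
  have hEa : ∀ i, E i 0 = a i := by
    intro i
    simp [hE, Finsupp.single_apply]
  have hEb : ∀ i, E i 1 = b i := by
    intro i
    simp [hE, Finsupp.single_apply]
  ext f
  constructor
  · -- I ⊆ closure
    intro hf
    refine ⟨1, le_refl 1, ?_⟩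
    rw [Submodule.mem_colon]
    intro p hp
    rw [pow_one] at hp
    rw [smul_eq_mul]
    exact (pow_two I) ▸ Ideal.mul_mem_mul hf hp
  · -- closure ⊆ I
    rintro ⟨m, hm, hcolon⟩
    -- Pick the special index to test against: 0 in case a, n in case b
    obtain ⟨i0, hi0n, hcomb⟩ :
        ∃ i0 ≤ n, ∀ (g : Fin (m + 1) → ℕ), (∀ j, g j ≤ n) → ∀ c d : ℕ,
          (∑ j, a (g j) ≤ c + m * a i0) → (∑ j, b (g j) ≤ d + m * b i0) →
          ∃ i ≤ n, a i ≤ c ∧ b i ≤ d := by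
      rcases hhalf with h | h
      · exact ⟨0, Nat.zero_le n, fun g hg c d hc hd =>
          comb_a n m a b ha0 hbn h g hg c d hc hd⟩
      · exact ⟨n, le_refl n, fun g hg c d hc hd =>
          comb_b n m a b ha0 hbn h g hg c d hc hd⟩
    have hgen : monomial (E i0) (1 : K) ∈ I :=
      Ideal.subset_span ⟨E i0, ⟨i0, hi0n, rfl⟩, rfl⟩
    have hp : monomial (m • E i0) (1 : K) ∈ I ^ m := by
      have := Ideal.pow_mem_pow hgen m
      rwa [monomial_pow, one_pow] at this
    have hfp : f * monomial (m • E i0) (1 : K) ∈ I ^ (m + 1) := by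
      have := Submodule.mem_colon.mp hcolon _ hp
      rwa [smul_eq_mul] at this
    rw [span_monomial_pow] at hfp
    rw [SetLike.mem_coe, hI, mem_ideal_span_monomial_image]
    intro u hu
    have hmem : u + m • E i0 ∈ (f * monomial (m • E i0) (1 : K)).support := by
      rw [mem_support_iff, coeff_mul_monomial, mul_one]
      exact mem_support_iff.mp hu
    obtain ⟨s, hsS, hsle⟩ := mem_ideal_span_monomial_image.mp hfp _ hmem
    obtain ⟨g, hgS, rfl⟩ := mem_sumPow hsS
    choose idx hidx hgidx using fun j => hgS j
    have hle := Finsupp.le_def.mp hsle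
    have h0 : ∑ j, a (idx j) ≤ u 0 + m * a i0 := by
      have := hle 0
      rw [Finsupp.add_apply, Finsupp.coe_smul, Pi.smul_apply, smul_eq_mul, hEa] at this
      calc ∑ j, a (idx j) = (∑ j, g j) 0 := by
            rw [Finsupp.finset_sum_apply]
            exact Finset.sum_congr rfl fun j _ => by rw [← hgidx j, hEa]
        _ ≤ u 0 + m * a i0 := this
    have h1 : ∑ j, b (idx j) ≤ u 1 + m * b i0 := by
      have := hle 1
      rw [Finsupp.add_apply, Finsupp.coe_smul, Pi.smul_apply, smul_eq_mul, hEb] at this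
      calc ∑ j, b (idx j) = (∑ j, g j) 1 := by
            rw [Finsupp.finset_sum_apply]
            exact Finset.sum_congr rfl fun j _ => by rw [← hgidx j, hEb]
        _ ≤ u 1 + m * b i0 := this
    obtain ⟨i, hin, hia, hib⟩ := hcomb idx hidx (u 0) (u 1) h0 h1
    refine ⟨E i, ⟨i, hin, rfl⟩, ?_⟩
    rw [Finsupp.le_def, Fin.forall_fin_two, hEa, hEb]
    exact ⟨hia, hib⟩
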